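/- Let q : (0,1] × ℝⁿ × ℝⁿ → [0,∞) be jointly measurable. Assume: (i) there are constants C₁, C₂, a > 0, α > 0, N ≥ 0 and t₀ ∈ (0,1/4) such that for all u ∈ (0,t₀] and all x, y ∈ ℝⁿ, q_u(x,y) ≤ C₁ u^{−N}, and q_u(x,y) ≤ C₁ u^{−N} exp(−C₂ |x−y|^{2α}/u) whenever |x−y| ≥ a√u; (ii) K := sup_{r ∈ [1/4,1]} sup_{x,y ∈ ℝⁿ} q_r(x,y) < ∞; (iii) ∫_{ℝⁿ} q_s(x,y) dy ≤ 1 and ∫_{ℝⁿ} q_s(x,y) dx ≤ 1 for all s ∈ (0,1] and all x, y respectively. Fix x₀, y₀ ∈ ℝⁿ with 0 < q₁(x₀,y₀) < ∞. Then for every p > 0 with (n+p)/2 > N + 1 and (n+p)/(2α) > N + 1, there exist constants C > 0 and δ > 0 such that for all 0 ≤ s < t ≤ 1 with t − s ≤ t₀, the bridge two-point moment of order p satisfies E[|y_s − y_t|^p] ≤ C (t−s)^{1+δ}. -/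

import Mathlib

/-!
Split the `p`-th moment of one transition density `q_u(z, ·)` at radius `a√u`. Inside the ball
the on-diagonal bound gives `C₁ u^{-N} (a√u)^{n+p}`. Outside, `e^{-x} ≤ m^m x^{-m}` turns the
sub-Gaussian factor into `u^m |z - w|^{-2αm}`, and for `2αm > n + p` the tail integral scales like
`(a√u)^{p - 2αm + n}`. Taking `m` slightly above `(n + p)/(2α)`, both pieces are `O(u^{1+δ})`
precisely under the two conditions on `p`.

In the bridge, one of the two outer legs has length at least `1/4`, so its density is at most the
large-time bound `K`; the other integrates to at most `1`, and the middle leg contributes the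
single-kernel moment with `u = t - s`.
-/

open MeasureTheory ENNReal

/-- The bridge two-point moment of order `p` of the bridge from `x₀` to `y₀` at times
`s < t`: for `0 < s < t < 1` it is
`q₁(x₀,y₀)⁻¹ ∫∫ |x−y|^p q_s(x₀,x) q_{t−s}(x,y) q_{1−t}(y,y₀) dy dx`;
for `s = 0` it is `q₁(x₀,y₀)⁻¹ ∫ |x₀−y|^p q_t(x₀,y) q_{1−t}(y,y₀) dy`, and for `t = 1`
it is `q₁(x₀,y₀)⁻¹ ∫ |x−y₀|^p q_s(x₀,x) q_{1−s}(x,y₀) dx`. -/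
noncomputable def bridgeMoment (n : ℕ)
    (q : ℝ → EuclideanSpace ℝ (Fin n) → EuclideanSpace ℝ (Fin n) → ℝ≥0∞)
    (x₀ y₀ : EuclideanSpace ℝ (Fin n)) (p s t : ℝ) : ℝ≥0∞ :=
  if s = 0 then
    (q 1 x₀ y₀)⁻¹ * ∫⁻ y, ENNReal.ofReal (dist x₀ y ^ p) * (q t x₀ y * q (1 - t) y y₀)
  else if t = 1 then
    (q 1 x₀ y₀)⁻¹ * ∫⁻ x, ENNReal.ofReal (dist x y₀ ^ p) * (q s x₀ x * q (1 - s) x y₀)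
  else
    (q 1 x₀ y₀)⁻¹ *
      ∫⁻ x, ∫⁻ y,
        ENNReal.ofReal (dist x y ^ p) * (q s x₀ x * q (t - s) x y * q (1 - t) y y₀)

open Measure Metric Module Set

namespace Real

theorem exp_neg_le_rpow_mul_rpow_neg {x m : ℝ} (hx : 0 < x) (hm : 0 < m) :
    exp (-x) ≤ m ^ m * x ^ (-m) := by
  have h : (x / m) ^ m ≤ exp x :=
    calc (x / m) ^ m ≤ exp (x / m) ^ m :=
          rpow_le_rpow (by positivity) (by linarith [add_one_le_exp (x / m)]) hm.le
      _ = exp x := by rw [← exp_mul, div_mul_cancel₀ x hm.ne']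
  calc exp (-x) = (exp x)⁻¹ := exp_neg x
    _ ≤ ((x / m) ^ m)⁻¹ := inv_anti₀ (by positivity) h
    _ = m ^ m * x ^ (-m) := by
      rw [div_rpow hx.le hm.le, inv_div, rpow_neg hx.le, div_eq_mul_inv]

theorem rpow_mul_exp_neg_div_le {r u C α m : ℝ} (p : ℝ) (hr : 0 < r) (hu : 0 < u) (hC : 0 < C)
    (hm : 0 < m) :
    r ^ p * exp (-C * r ^ (2 * α) / u) ≤ m ^ m * C ^ (-m) * u ^ m * r ^ (p - 2 * α * m) := by
  have hx : 0 < C * r ^ (2 * α) / u := by positivity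
  calc r ^ p * exp (-C * r ^ (2 * α) / u)
      ≤ r ^ p * (m ^ m * (C * r ^ (2 * α) / u) ^ (-m)) := by
        rw [neg_mul, neg_div]
        gcongr
        exact exp_neg_le_rpow_mul_rpow_neg hx hm
    _ = m ^ m * C ^ (-m) * u ^ m * r ^ (p - 2 * α * m) := by
        rw [div_rpow (by positivity) hu.le, mul_rpow hC.le (by positivity), ← rpow_mul hr.le,
          rpow_neg hu.le m, div_inv_eq_mul, rpow_sub hr, mul_neg, rpow_neg hr.le]
        ring

theorem mul_sqrt_rpow {a u : ℝ} (ha : 0 ≤ a) (hu : 0 ≤ u) (e : ℝ) :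
    (a * √u) ^ e = a ^ e * u ^ (e / 2) := by
  rw [mul_rpow ha (sqrt_nonneg u), sqrt_eq_rpow, ← rpow_mul hu, one_div_mul_eq_div]

end Real

section Haar

variable {E : Type*} [NormedAddCommGroup E] [NormedSpace ℝ E] [FiniteDimensional ℝ E]
  [MeasurableSpace E] [BorelSpace E] (μ : Measure E) [μ.IsAddHaarMeasure]

theorem lintegral_comp_smul_of_pos (f : E → ℝ≥0∞) {R : ℝ} (hR : 0 < R) :
    ∫⁻ x, f (R • x) ∂μ = ENNReal.ofReal ((R ^ finrank ℝ E)⁻¹) * ∫⁻ x, f x ∂μ := by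
  calc ∫⁻ x, f (R • x) ∂μ = ∫⁻ x, f x ∂(map (R • ·) μ) :=
        (lintegral_map_equiv f
          (Homeomorph.smul (isUnit_iff_ne_zero.2 hR.ne').unit).toMeasurableEquiv).symm
    _ = _ := by
        rw [map_addHaar_smul μ hR.ne', lintegral_smul_measure, abs_of_pos (by positivity)]
        rfl

theorem setLIntegral_compl_ball_rpow_dist (z : E) {R : ℝ} (hR : 0 < R) (γ : ℝ) :
    ∫⁻ w in (ball z R)ᶜ, ENNReal.ofReal (dist z w ^ γ) ∂μ =
      ENNReal.ofReal (R ^ (γ + finrank ℝ E)) *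
        ∫⁻ v in (ball 0 1)ᶜ, ENNReal.ofReal (‖v‖ ^ γ) ∂μ := by
  set F : E → ℝ≥0∞ := (ball 0 R)ᶜ.indicator fun v => ENNReal.ofReal (‖v‖ ^ γ)
  have h_translate : ∀ v,
      (ball z R)ᶜ.indicator (fun w => ENNReal.ofReal (dist z w ^ γ)) (v + z) = F v := by
    intro v
    simp [F, indicator, dist_eq_norm]
  have h_scale : ∀ v, F (R • v) =
      ENNReal.ofReal (R ^ γ) * (ball 0 1)ᶜ.indicator (fun v => ENNReal.ofReal (‖v‖ ^ γ)) v := by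
    intro v
    simp [F, indicator, norm_smul, abs_of_pos hR, le_mul_iff_one_le_right hR,
      Real.mul_rpow hR.le (norm_nonneg v), ofReal_mul (Real.rpow_nonneg hR.le γ)]
  rw [← lintegral_indicator measurableSet_ball.compl, ← lintegral_add_right_eq_self _ z,
    ← lintegral_indicator measurableSet_ball.compl]
  simp_rw [h_translate]
  calc ∫⁻ v, F v ∂μ = ENNReal.ofReal (R ^ finrank ℝ E) * ∫⁻ v, F (R • v) ∂μ := by
        rw [lintegral_comp_smul_of_pos μ F hR, ← mul_assoc, ← ofReal_mul (by positivity),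
          mul_inv_cancel₀ (by positivity), ofReal_one, one_mul]
    _ = _ := by
        simp_rw [h_scale]
        rw [lintegral_const_mul' _ _ ofReal_ne_top, ← mul_assoc, ← ofReal_mul (by positivity),
          ← Real.rpow_natCast, ← Real.rpow_add hR, add_comm]

theorem setLIntegral_compl_unitBall_norm_rpow_lt_top {γ : ℝ} (hγ : γ + finrank ℝ E < 0) :
    ∫⁻ v in (ball 0 1)ᶜ, ENNReal.ofReal (‖v‖ ^ γ) ∂μ < ⊤ := by
  have hγ_nonpos : γ ≤ 0 := by linarith [(finrank ℝ E).cast_nonneg (α := ℝ)]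
  have h_le : ∀ v ∈ (ball (0 : E) 1)ᶜ, ENNReal.ofReal (‖v‖ ^ γ) ≤
      ENNReal.ofReal (2 ^ (-γ)) * ENNReal.ofReal ((1 + ‖v‖) ^ (-(-γ))) := by
    intro v hv
    have hv : 1 ≤ ‖v‖ := by simpa using hv
    rw [← ofReal_mul (by positivity), neg_neg]
    gcongr
    calc ‖v‖ ^ γ ≤ ((1 + ‖v‖) / 2) ^ γ :=
          Real.rpow_le_rpow_of_nonpos (by positivity) (by linarith) hγ_nonpos
      _ = 2 ^ (-γ) * (1 + ‖v‖) ^ γ := by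
        rw [Real.div_rpow (by positivity) zero_le_two, Real.rpow_neg zero_le_two, div_eq_inv_mul]
  calc ∫⁻ v in (ball 0 1)ᶜ, ENNReal.ofReal (‖v‖ ^ γ) ∂μ
      ≤ ∫⁻ v in (ball 0 1)ᶜ,
          ENNReal.ofReal (2 ^ (-γ)) * ENNReal.ofReal ((1 + ‖v‖) ^ (-(-γ))) ∂μ :=
        setLIntegral_mono' measurableSet_ball.compl h_le
    _ ≤ ∫⁻ v, ENNReal.ofReal (2 ^ (-γ)) * ENNReal.ofReal ((1 + ‖v‖) ^ (-(-γ))) ∂μ :=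
        setLIntegral_le_lintegral _ _
    _ < ⊤ := by
        rw [lintegral_const_mul' _ _ ofReal_ne_top]
        exact mul_lt_top ofReal_lt_top (finite_integral_one_add_norm (by linarith))

theorem setLIntegral_ball_rpow_dist_mul_le (z : E) {R c p : ℝ} (hR : 0 < R) (hp : 0 ≤ p)
    {k : E → ℝ≥0∞} (hk : ∀ w, k w ≤ ENNReal.ofReal c) :
    ∫⁻ w in ball z R, ENNReal.ofReal (dist z w ^ p) * k w ∂μ ≤
      ENNReal.ofReal (c * R ^ (p + finrank ℝ E)) * μ (ball 0 1) := by
  calc ∫⁻ w in ball z R, ENNReal.ofReal (dist z w ^ p) * k w ∂μ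
      ≤ ∫⁻ _ in ball z R, ENNReal.ofReal (R ^ p * c) ∂μ := by
        refine setLIntegral_mono' measurableSet_ball fun w hw => ?_
        rw [ofReal_mul (by positivity)]
        gcongr
        · exact (mem_ball'.1 hw).le
        · exact hk w
    _ = ENNReal.ofReal (c * R ^ (p + finrank ℝ E)) * μ (ball 0 1) := by
        rw [setLIntegral_const, addHaar_ball_of_pos μ z hR, ← mul_assoc,
          ← ofReal_mul' (by positivity), Real.rpow_add hR, Real.rpow_natCast]
        congr 2; ring

theorem setLIntegral_compl_ball_rpow_dist_mul_le (z : E) {R c C α m u p : ℝ} (hR : 0 < R)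
    (hc : 0 ≤ c) (hC : 0 < C) (hm : 0 < m) (hu : 0 < u) {k : E → ℝ≥0∞}
    (hk : ∀ w, R ≤ dist z w → k w ≤ ENNReal.ofReal (c * Real.exp (-C * dist z w ^ (2 * α) / u))) :
    ∫⁻ w in (ball z R)ᶜ, ENNReal.ofReal (dist z w ^ p) * k w ∂μ ≤
      ENNReal.ofReal (c * m ^ m * C ^ (-m) * u ^ m * R ^ (p - 2 * α * m + finrank ℝ E)) *
        ∫⁻ v in (ball 0 1)ᶜ, ENNReal.ofReal (‖v‖ ^ (p - 2 * α * m)) ∂μ := by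
  have h_pointwise : ∀ w ∈ (ball z R)ᶜ, ENNReal.ofReal (dist z w ^ p) * k w ≤
      ENNReal.ofReal (c * m ^ m * C ^ (-m) * u ^ m) *
        ENNReal.ofReal (dist z w ^ (p - 2 * α * m)) := by
    intro w hw
    have hRw : R ≤ dist z w := by rw [dist_comm]; simpa using hw
    calc ENNReal.ofReal (dist z w ^ p) * k w
        ≤ ENNReal.ofReal (dist z w ^ p) *
            ENNReal.ofReal (c * Real.exp (-C * dist z w ^ (2 * α) / u)) := by
          gcongr; exact hk w hRw
      _ = ENNReal.ofReal (c * (dist z w ^ p * Real.exp (-C * dist z w ^ (2 * α) / u))) := by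
          rw [← ofReal_mul (by positivity)]; congr 1; ring
      _ ≤ ENNReal.ofReal (c * (m ^ m * C ^ (-m) * u ^ m * dist z w ^ (p - 2 * α * m))) := by
          gcongr ENNReal.ofReal (_ * ?_)
          exact Real.rpow_mul_exp_neg_div_le p (hR.trans_le hRw) hu hC hm
      _ = _ := by rw [← ofReal_mul (by positivity)]; congr 1; ring
  calc ∫⁻ w in (ball z R)ᶜ, ENNReal.ofReal (dist z w ^ p) * k w ∂μ
      ≤ ∫⁻ w in (ball z R)ᶜ, ENNReal.ofReal (c * m ^ m * C ^ (-m) * u ^ m) *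
          ENNReal.ofReal (dist z w ^ (p - 2 * α * m)) ∂μ :=
        setLIntegral_mono' measurableSet_ball.compl h_pointwise
    _ = _ := by
        rw [lintegral_const_mul' _ _ ofReal_ne_top, setLIntegral_compl_ball_rpow_dist μ z hR,
          ← mul_assoc, ← ofReal_mul (by positivity)]

theorem lintegral_rpow_dist_mul_le_of_subgaussian {C₁ C₂ a α N p m u : ℝ} (hC₁ : 0 ≤ C₁)
    (hC₂ : 0 < C₂) (ha : 0 < a) (hp : 0 ≤ p) (hm : 0 < m) (hu : 0 < u) (z : E)
    {k : E → ℝ≥0∞} (hk_diag : ∀ w, k w ≤ ENNReal.ofReal (C₁ * u ^ (-N)))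
    (hk_offdiag : ∀ w, a * √u ≤ dist z w →
      k w ≤ ENNReal.ofReal (C₁ * u ^ (-N) * Real.exp (-C₂ * dist z w ^ (2 * α) / u))) :
    ∫⁻ w, ENNReal.ofReal (dist z w ^ p) * k w ∂μ ≤
      ENNReal.ofReal (C₁ * a ^ (p + finrank ℝ E) * u ^ ((p + finrank ℝ E) / 2 - N)) *
          μ (ball 0 1) +
        ENNReal.ofReal (C₁ * m ^ m * C₂ ^ (-m) * a ^ (p - 2 * α * m + finrank ℝ E) *
            u ^ (m - N + (p - 2 * α * m + finrank ℝ E) / 2)) *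
          ∫⁻ v in (ball 0 1)ᶜ, ENNReal.ofReal (‖v‖ ^ (p - 2 * α * m)) ∂μ := by
  have hR : 0 < a * √u := by positivity
  rw [← lintegral_add_compl _ (measurableSet_ball (x := z) (ε := a * √u))]
  gcongr ?_ + ?_
  · refine (setLIntegral_ball_rpow_dist_mul_le μ z hR hp hk_diag).trans_eq ?_
    rw [Real.mul_sqrt_rpow ha.le hu.le, Real.rpow_sub hu, Real.rpow_neg hu.le]
    congr 2; ring
  · refine (setLIntegral_compl_ball_rpow_dist_mul_le μ z hR (by positivity) hC₂ hm hu
      hk_offdiag).trans_eq ?_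
    rw [Real.mul_sqrt_rpow ha.le hu.le, Real.rpow_add hu, Real.rpow_sub hu, Real.rpow_neg hu.le]
    congr 2; ring

theorem exists_lintegral_rpow_dist_mul_le {C₁ C₂ a α N p : ℝ} (hC₁ : 0 ≤ C₁) (hC₂ : 0 < C₂)
    (ha : 0 < a) (hα : 0 < α) (hp : 0 ≤ p) (h_diag : N + 1 < (finrank ℝ E + p) / 2)
    (h_offdiag : N + 1 < (finrank ℝ E + p) / (2 * α)) :
    ∃ 𝒞 < (⊤ : ℝ≥0∞), ∃ δ > (0 : ℝ), ∀ u ∈ Ioc (0 : ℝ) 1, ∀ (z : E) (k : E → ℝ≥0∞),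
      (∀ w, k w ≤ ENNReal.ofReal (C₁ * u ^ (-N))) →
      (∀ w, a * √u ≤ dist z w →
        k w ≤ ENNReal.ofReal (C₁ * u ^ (-N) * Real.exp (-C₂ * dist z w ^ (2 * α) / u))) →
      ∫⁻ w, ENNReal.ofReal (dist z w ^ p) * k w ∂μ ≤ 𝒞 * ENNReal.ofReal (u ^ (1 + δ)) := by
  set n : ℝ := (finrank ℝ E : ℝ)
  set D := (n + p) / (2 * α) - N - 1 with hD_def
  have hD : 0 < D := by linarith
  -- With this `m`, `p - 2αm = -n - D`: the tail `‖v‖^(p - 2αm)` is integrable, and the far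
  -- exponent `m - N - D/2 = 1 + D/2 + D/(2α)` stays above `1 + δ`.
  set m := (n + p + D) / (2 * α)
  have hm : 0 < m := by positivity
  have hγ : p - 2 * α * m + n = -D := by simp only [m]; field_simp; ring
  set δ := min ((n + p) / 2 - N - 1) (D / 2)
  set T := ∫⁻ v in (ball 0 1)ᶜ, ENNReal.ofReal (‖v‖ ^ (p - 2 * α * m)) ∂μ
  have hT : T < ⊤ := setLIntegral_compl_unitBall_norm_rpow_lt_top μ (by linarith)
  refine ⟨ENNReal.ofReal (C₁ * a ^ (p + n)) * μ (ball 0 1) +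
      ENNReal.ofReal (C₁ * m ^ m * C₂ ^ (-m) * a ^ (-D)) * T,
    add_lt_top.2 ⟨mul_lt_top ofReal_lt_top measure_ball_lt_top, mul_lt_top ofReal_lt_top hT⟩,
    δ, lt_min (by linarith) (by positivity), ?_⟩
  rintro u ⟨hu, hu1⟩ z k hk_diag hk_offdiag
  have h_near : u ^ ((p + n) / 2 - N) ≤ u ^ (1 + δ) := by
    refine Real.rpow_le_rpow_of_exponent_ge hu hu1 ?_
    linarith [min_le_left ((n + p) / 2 - N - 1) (D / 2)]
  have h_far : u ^ (m - N + -D / 2) ≤ u ^ (1 + δ) := by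
    refine Real.rpow_le_rpow_of_exponent_ge hu hu1 ?_
    have : m = (n + p) / (2 * α) + D / (2 * α) := add_div _ _ _
    have : 0 < D / (2 * α) := by positivity
    linarith [min_le_right ((n + p) / 2 - N - 1) (D / 2)]
  refine (lintegral_rpow_dist_mul_le_of_subgaussian μ hC₁ hC₂ ha hp hm hu z hk_diag
    hk_offdiag).trans ?_
  rw [hγ, add_mul]
  gcongr ?_ + ?_
  · calc ENNReal.ofReal (C₁ * a ^ (p + n) * u ^ ((p + n) / 2 - N)) * μ (ball 0 1)
        ≤ ENNReal.ofReal (C₁ * a ^ (p + n) * u ^ (1 + δ)) * μ (ball 0 1) := by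
          gcongr ENNReal.ofReal (_ * ?_) * _
      _ = _ := by rw [ofReal_mul (by positivity)]; ring
  · calc ENNReal.ofReal (C₁ * m ^ m * C₂ ^ (-m) * a ^ (-D) * u ^ (m - N + -D / 2)) * T
        ≤ ENNReal.ofReal (C₁ * m ^ m * C₂ ^ (-m) * a ^ (-D) * u ^ (1 + δ)) * T := by
          gcongr ENNReal.ofReal (_ * ?_) * _
      _ = _ := by rw [ofReal_mul (by positivity)]; ring

end Haar

section Bridge

variable {n : ℕ} {q : ℝ → EuclideanSpace ℝ (Fin n) → EuclideanSpace ℝ (Fin n) → ℝ≥0∞}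
  {x₀ y₀ : EuclideanSpace ℝ (Fin n)} {p s t : ℝ} {K c : ℝ≥0∞}

theorem bridgeMoment_zero_le (hK : K ≠ ⊤) (h_final : ∀ y, q (1 - t) y y₀ ≤ K)
    (h_moment : ∫⁻ y, ENNReal.ofReal (dist x₀ y ^ p) * q t x₀ y ≤ c) :
    bridgeMoment n q x₀ y₀ p 0 t ≤ (q 1 x₀ y₀)⁻¹ * (K * c) := by
  rw [bridgeMoment, if_pos rfl]
  gcongr
  calc ∫⁻ y, ENNReal.ofReal (dist x₀ y ^ p) * (q t x₀ y * q (1 - t) y y₀)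
      ≤ ∫⁻ y, ENNReal.ofReal (dist x₀ y ^ p) * q t x₀ y * K := by
        refine lintegral_mono fun y => ?_
        rw [← mul_assoc]; gcongr; exact h_final y
    _ ≤ K * c := by rw [lintegral_mul_const' _ _ hK, mul_comm]; gcongr

theorem bridgeMoment_one_le (hs : s ≠ 0) (hK : K ≠ ⊤) (h_initial : ∀ x, q s x₀ x ≤ K)
    (h_moment : ∫⁻ x, ENNReal.ofReal (dist x y₀ ^ p) * q (1 - s) x y₀ ≤ c) :
    bridgeMoment n q x₀ y₀ p s 1 ≤ (q 1 x₀ y₀)⁻¹ * (K * c) := by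
  rw [bridgeMoment, if_neg hs, if_pos rfl]
  gcongr
  calc ∫⁻ x, ENNReal.ofReal (dist x y₀ ^ p) * (q s x₀ x * q (1 - s) x y₀)
      ≤ ∫⁻ x, ENNReal.ofReal (dist x y₀ ^ p) * q (1 - s) x y₀ * K := by
        refine lintegral_mono fun x => ?_
        rw [mul_comm (q s x₀ x), ← mul_assoc]; gcongr; exact h_initial x
    _ ≤ K * c := by rw [lintegral_mul_const' _ _ hK, mul_comm]; gcongr

theorem bridgeMoment_le_of_final_le
    (hq : Measurable fun p : ℝ × EuclideanSpace ℝ (Fin n) × EuclideanSpace ℝ (Fin n) =>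
      q p.1 p.2.1 p.2.2) (hs : s ≠ 0) (ht : t ≠ 1) (hK : K ≠ ⊤) (hc : c ≠ ⊤)
    (h_mass : ∫⁻ x, q s x₀ x ≤ 1) (h_final : ∀ y, q (1 - t) y y₀ ≤ K)
    (h_moment : ∀ x, ∫⁻ y, ENNReal.ofReal (dist x y ^ p) * q (t - s) x y ≤ c) :
    bridgeMoment n q x₀ y₀ p s t ≤ (q 1 x₀ y₀)⁻¹ * (K * c) := by
  rw [bridgeMoment, if_neg hs, if_neg ht]
  gcongr
  have h_inner : ∀ x, ∫⁻ y, ENNReal.ofReal (dist x y ^ p) *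
      (q s x₀ x * q (t - s) x y * q (1 - t) y y₀) ≤ q s x₀ x * (K * c) := by
    intro x
    calc ∫⁻ y, ENNReal.ofReal (dist x y ^ p) * (q s x₀ x * q (t - s) x y * q (1 - t) y y₀)
        ≤ ∫⁻ y, q s x₀ x * K * (ENNReal.ofReal (dist x y ^ p) * q (t - s) x y) := by
          refine lintegral_mono fun y => ?_
          calc ENNReal.ofReal (dist x y ^ p) * (q s x₀ x * q (t - s) x y * q (1 - t) y y₀)
              = q s x₀ x * (ENNReal.ofReal (dist x y ^ p) * q (t - s) x y) * q (1 - t) y y₀ := by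
                ring
            _ ≤ q s x₀ x * (ENNReal.ofReal (dist x y ^ p) * q (t - s) x y) * K := by
                gcongr; exact h_final y
            _ = _ := by ring
      _ ≤ q s x₀ x * (K * c) := by
          rw [lintegral_const_mul'' _ (by fun_prop), mul_assoc]
          gcongr
          exact h_moment x
  calc ∫⁻ x, ∫⁻ y, ENNReal.ofReal (dist x y ^ p) * (q s x₀ x * q (t - s) x y * q (1 - t) y y₀)
      ≤ ∫⁻ x, q s x₀ x * (K * c) := lintegral_mono h_inner
    _ ≤ K * c := by
        rw [lintegral_mul_const' _ _ (mul_ne_top hK hc)]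
        exact mul_le_of_le_one_left' h_mass

theorem bridgeMoment_le_of_initial_le
    (hq : Measurable fun p : ℝ × EuclideanSpace ℝ (Fin n) × EuclideanSpace ℝ (Fin n) =>
      q p.1 p.2.1 p.2.2) (hs : s ≠ 0) (ht : t ≠ 1) (hK : K ≠ ⊤) (hc : c ≠ ⊤)
    (h_mass : ∫⁻ y, q (1 - t) y y₀ ≤ 1) (h_initial : ∀ x, q s x₀ x ≤ K)
    (h_moment : ∀ y, ∫⁻ x, ENNReal.ofReal (dist x y ^ p) * q (t - s) x y ≤ c) :
    bridgeMoment n q x₀ y₀ p s t ≤ (q 1 x₀ y₀)⁻¹ * (K * c) := by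
  rw [bridgeMoment, if_neg hs, if_neg ht]
  gcongr
  have h_inner : ∀ y, ∫⁻ x, ENNReal.ofReal (dist x y ^ p) * q (t - s) x y * q (1 - t) y y₀ ≤
      c * q (1 - t) y y₀ := fun y => by
    rw [lintegral_mul_const'' _ (by fun_prop)]
    gcongr
    exact h_moment y
  calc ∫⁻ x, ∫⁻ y, ENNReal.ofReal (dist x y ^ p) * (q s x₀ x * q (t - s) x y * q (1 - t) y y₀)
      ≤ ∫⁻ x, ∫⁻ y, K * (ENNReal.ofReal (dist x y ^ p) * q (t - s) x y * q (1 - t) y y₀) := by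
        refine lintegral_mono fun x => lintegral_mono fun y => ?_
        calc ENNReal.ofReal (dist x y ^ p) * (q s x₀ x * q (t - s) x y * q (1 - t) y y₀)
            = q s x₀ x * (ENNReal.ofReal (dist x y ^ p) * q (t - s) x y * q (1 - t) y y₀) := by
              ring
          _ ≤ _ := by gcongr; exact h_initial x
    _ = K * ∫⁻ y, ∫⁻ x, ENNReal.ofReal (dist x y ^ p) * q (t - s) x y * q (1 - t) y y₀ := by
        simp_rw [lintegral_const_mul' _ _ hK]
        rw [lintegral_lintegral_swap (by fun_prop)]
    _ ≤ K * ∫⁻ y, c * q (1 - t) y y₀ := by gcongr with y; exact h_inner y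
    _ ≤ K * c := by
        rw [lintegral_const_mul' _ _ hc]
        gcongr
        exact mul_le_of_le_one_right' h_mass

theorem bridgeMoment_le
    (hq : Measurable fun p : ℝ × EuclideanSpace ℝ (Fin n) × EuclideanSpace ℝ (Fin n) =>
      q p.1 p.2.1 p.2.2) (hK : K ≠ ⊤) (hc : c ≠ ⊤)
    (h_large : ∀ r ∈ Icc (1 / 4 : ℝ) 1, ∀ x y, q r x y ≤ K)
    (h_mass_right : ∀ s ∈ Ioc (0 : ℝ) 1, ∀ x, ∫⁻ y, q s x y ≤ 1)
    (h_mass_left : ∀ s ∈ Ioc (0 : ℝ) 1, ∀ y, ∫⁻ x, q s x y ≤ 1)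
    (hs : 0 ≤ s) (hst : s < t) (ht : t ≤ 1) (hts : t - s ≤ 1 / 4)
    (h_row : ∀ x, ∫⁻ y, ENNReal.ofReal (dist x y ^ p) * q (t - s) x y ≤ c)
    (h_col : ∀ y, ∫⁻ x, ENNReal.ofReal (dist x y ^ p) * q (t - s) x y ≤ c) :
    bridgeMoment n q x₀ y₀ p s t ≤ (q 1 x₀ y₀)⁻¹ * (K * c) := by
  rcases hs.eq_or_lt with rfl | hs
  · exact bridgeMoment_zero_le hK (fun y => h_large _ ⟨by linarith, by linarith⟩ y y₀)
      (by simpa using h_row x₀)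
  rcases ht.eq_or_lt with rfl | ht
  · exact bridgeMoment_one_le hs.ne' hK (fun x => h_large _ ⟨by linarith, by linarith⟩ x₀ x)
      (h_col y₀)
  -- If `t ≤ 1/2` the last leg has length `1 - t ≥ 1/2`, otherwise the first has `s ≥ t - 1/4 > 1/4`.
  by_cases h_half : t ≤ 1 / 2
  · exact bridgeMoment_le_of_final_le hq hs.ne' ht.ne hK hc
      (h_mass_right s ⟨hs, by linarith⟩ x₀) (fun y => h_large _ ⟨by linarith, by linarith⟩ y y₀)
      h_row
  · exact bridgeMoment_le_of_initial_le hq hs.ne' ht.ne hK hc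
      (h_mass_left (1 - t) ⟨by linarith, by linarith⟩ y₀)
      (fun x => h_large s ⟨by linarith, by linarith⟩ x₀ x) h_col

end Bridge

theorem bridge_kolmogorov_moment_bound_general
    (n : ℕ)
    (q : ℝ → EuclideanSpace ℝ (Fin n) → EuclideanSpace ℝ (Fin n) → ℝ≥0∞)
    (hq_meas : Measurable
      fun p : ℝ × EuclideanSpace ℝ (Fin n) × EuclideanSpace ℝ (Fin n) => q p.1 p.2.1 p.2.2)
    (C₁ C₂ a α N t₀ : ℝ)
    (hC₁ : 0 < C₁) (hC₂ : 0 < C₂) (ha : 0 < a) (hα : 0 < α)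
    (ht₀ : t₀ ∈ Set.Ioo (0 : ℝ) (1 / 4))
    (hondiag : ∀ u ∈ Set.Ioc (0 : ℝ) t₀, ∀ x y, q u x y ≤ ENNReal.ofReal (C₁ * u ^ (-N)))
    (hoffdiag : ∀ u ∈ Set.Ioc (0 : ℝ) t₀, ∀ x y, a * Real.sqrt u ≤ dist x y →
        q u x y ≤ ENNReal.ofReal (C₁ * u ^ (-N) * Real.exp (-C₂ * dist x y ^ (2 * α) / u)))
    (hlarge : (⨆ r ∈ Set.Icc (1 / 4 : ℝ) 1, ⨆ x, ⨆ y, q r x y) < ⊤)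
    (hmass_right : ∀ s ∈ Set.Ioc (0 : ℝ) 1, ∀ x, ∫⁻ y, q s x y ≤ 1)
    (hmass_left : ∀ s ∈ Set.Ioc (0 : ℝ) 1, ∀ y, ∫⁻ x, q s x y ≤ 1)
    (x₀ y₀ : EuclideanSpace ℝ (Fin n))
    (hq₁_pos : 0 < q 1 x₀ y₀) :
    ∀ p : ℝ, 0 < p → N + 1 < (n + p) / 2 → N + 1 < (n + p) / (2 * α) →
      ∃ C > (0 : ℝ), ∃ δ > (0 : ℝ), ∀ s t : ℝ, 0 ≤ s → s < t → t ≤ 1 → t - s ≤ t₀ →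
        bridgeMoment n q x₀ y₀ p s t ≤ ENNReal.ofReal (C * (t - s) ^ (1 + δ)) := by
  intro p hp h_diag h_offdiag
  obtain ⟨𝒞, h𝒞, δ, hδ, h_moment⟩ :=
    exists_lintegral_rpow_dist_mul_le (volume : Measure (EuclideanSpace ℝ (Fin n))) hC₁.le hC₂ ha
      hα hp.le (by simpa using h_diag) (by simpa using h_offdiag)
  set K := ⨆ r ∈ Icc (1 / 4 : ℝ) 1, ⨆ x, ⨆ y, q r x y
  have h_large : ∀ r ∈ Icc (1 / 4 : ℝ) 1, ∀ x y, q r x y ≤ K := fun r hr x y =>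
    le_iSup₂_of_le (f := fun r (_ : r ∈ Icc (1 / 4 : ℝ) 1) => ⨆ x, ⨆ y, q r x y) r hr
      (le_iSup₂_of_le x y le_rfl)
  set A := (q 1 x₀ y₀)⁻¹ * (K * 𝒞)
  have hA : A ≠ ⊤ := mul_ne_top (inv_ne_top.2 hq₁_pos.ne') (mul_ne_top hlarge.ne h𝒞.ne)
  refine ⟨A.toReal + 1, by positivity, δ, hδ, fun s t hs hst ht htt₀ => ?_⟩
  have hu : t - s ∈ Ioc 0 t₀ := ⟨by linarith, htt₀⟩
  have hu' : t - s ∈ Ioc (0 : ℝ) 1 := ⟨hu.1, by linarith [ht₀.2]⟩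
  calc bridgeMoment n q x₀ y₀ p s t
      ≤ (q 1 x₀ y₀)⁻¹ * (K * (𝒞 * ENNReal.ofReal ((t - s) ^ (1 + δ)))) := by
        refine bridgeMoment_le hq_meas hlarge.ne (mul_ne_top h𝒞.ne ofReal_ne_top) h_large
          hmass_right hmass_left hs hst ht (by linarith [ht₀.2]) (fun x => ?_) (fun y => ?_)
        · exact h_moment _ hu' x _ (hondiag _ hu x) (hoffdiag _ hu x)
        · simpa only [dist_comm] using h_moment _ hu' y (q (t - s) · y) (hondiag _ hu · y)
            fun x hx => by simpa only [dist_comm] using hoffdiag _ hu x y (by rwa [dist_comm])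
    _ = ENNReal.ofReal (A.toReal * (t - s) ^ (1 + δ)) := by
        rw [ofReal_mul toReal_nonneg, ofReal_toReal hA]; ring
    _ ≤ ENNReal.ofReal ((A.toReal + 1) * (t - s) ^ (1 + δ)) := by gcongr; linarith

/-- under the Euclidean Kusuoka–Stroock-type small-time sub-Gaussian bounds,
a uniform large-time bound and sub-probability mass of the kernels, the bridge from `x₀`
to `y₀` satisfies the Kolmogorov-criterion moment bound
`E[|y_s − y_t|^p] ≤ C (t−s)^{1+δ}` for all `0 ≤ s < t ≤ 1` with `t − s ≤ t₀`, for every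
`p > 0` with `(n+p)/2 > N+1` and `(n+p)/(2α) > N+1`. -/
theorem bridge_kolmogorov_moment_bound
    (n : ℕ)
    (q : ℝ → EuclideanSpace ℝ (Fin n) → EuclideanSpace ℝ (Fin n) → ℝ≥0∞)
    (hq_meas : Measurable
      fun p : ℝ × EuclideanSpace ℝ (Fin n) × EuclideanSpace ℝ (Fin n) => q p.1 p.2.1 p.2.2)
    (C₁ C₂ a α N t₀ : ℝ)
    (hC₁ : 0 < C₁) (hC₂ : 0 < C₂) (ha : 0 < a) (hα : 0 < α) (hN : 0 ≤ N)
    (ht₀ : t₀ ∈ Set.Ioo (0 : ℝ) (1 / 4))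
    (hondiag : ∀ u ∈ Set.Ioc (0 : ℝ) t₀, ∀ x y, q u x y ≤ ENNReal.ofReal (C₁ * u ^ (-N)))
    (hoffdiag : ∀ u ∈ Set.Ioc (0 : ℝ) t₀, ∀ x y, a * Real.sqrt u ≤ dist x y →
        q u x y ≤ ENNReal.ofReal (C₁ * u ^ (-N) * Real.exp (-C₂ * dist x y ^ (2 * α) / u)))
    (hlarge : (⨆ r ∈ Set.Icc (1 / 4 : ℝ) 1, ⨆ x, ⨆ y, q r x y) < ⊤)
    (hmass_right : ∀ s ∈ Set.Ioc (0 : ℝ) 1, ∀ x, ∫⁻ y, q s x y ≤ 1)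
    (hmass_left : ∀ s ∈ Set.Ioc (0 : ℝ) 1, ∀ y, ∫⁻ x, q s x y ≤ 1)
    (x₀ y₀ : EuclideanSpace ℝ (Fin n))
    (hq₁_pos : 0 < q 1 x₀ y₀) (hq₁_fin : q 1 x₀ y₀ < ⊤) :
    ∀ p : ℝ, 0 < p → N + 1 < (n + p) / 2 → N + 1 < (n + p) / (2 * α) →
      ∃ C > (0 : ℝ), ∃ δ > (0 : ℝ), ∀ s t : ℝ, 0 ≤ s → s < t → t ≤ 1 → t - s ≤ t₀ →
        bridgeMoment n q x₀ y₀ p s t ≤ ENNReal.ofReal (C * (t - s) ^ (1 + δ)) :=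
  bridge_kolmogorov_moment_bound_general n q hq_meas C₁ C₂ a α N t₀ hC₁ hC₂ ha hα ht₀ hondiag
    hoffdiag hlarge hmass_right hmass_left x₀ y₀ hq₁_pos
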